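/- arXiv:2007.11267 — 7 statements merged into one kernel-verified Lean document; each statement's English description precedes it below -/
import Mathlib

section
/- Fix integers e > 1, k with 0 ≤ k ≤ e−1, and N ≥ 2, and let Υ act on ℤ^N coordinatewise. Then Υ intertwines the negative e-action and the negative (e+1)-action of the extended affine Weyl group on ℤ^N; explicitly, for every λ = (λ_1,…,λ_N) ∈ ℤ^N: (i) Υ(s_r(λ)) = s_r(Υ(λ)) for each 1 ≤ r ≤ N−1, where s_r swaps the r-th and (r+1)-th coordinates; (ii) Υ(s_0^{(e)}(λ)) = s_0^{(e+1)}(Υ(λ)), where s_0^{(m)}(λ) = (λ_N − m, λ_2, …, λ_{N−1}, λ_1 + m); (iii) Υ(π^{(e)}(λ)) = π^{(e+1)}(Υ(λ)), where π^{(m)}(λ) = (λ_2, …, λ_N, λ_1 + m). -/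
/-- The map `Υ : ℤ → ℤ` defined by `Υ(a·e + b) = a·(e+1) + b` if `0 ≤ b ≤ k` and
`Υ(a·e + b) = a·(e+1) + b + 1` if `k+1 ≤ b ≤ e−1`, where `b` is the residue of the
argument modulo `e`. -/
def Ups (e k a : ℤ) : ℤ :=
  if a % e ≤ k then a / e * (e + 1) + a % e else a / e * (e + 1) + a % e + 1

/-- The map `s₀^{(m)} : λ ↦ (λ_N − m, λ_2, …, λ_{N−1}, λ_1 + m)` (0-based indices). -/
def sZero (m : ℤ) {N : ℕ} (lam : Fin N → ℤ) : Fin N → ℤ := fun i =>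
  if (i : ℕ) = 0 then lam ⟨N - 1, Nat.sub_lt i.pos one_pos⟩ - m
  else if (i : ℕ) = N - 1 then lam ⟨0, i.pos⟩ + m
  else lam i

/-- The map `π^{(m)} : λ ↦ (λ_2, …, λ_N, λ_1 + m)` (0-based indices). -/
def piMap (m : ℤ) {N : ℕ} (lam : Fin N → ℤ) : Fin N → ℤ := fun i =>
  if h : (i : ℕ) + 1 < N then lam ⟨(i : ℕ) + 1, h⟩ else lam ⟨0, i.pos⟩ + m

lemma Ups_add (e k a : ℤ) (he : 0 < e) : Ups e k (a + e) = Ups e k a + (e + 1) := by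
  unfold Ups
  have h1 : (a + e) % e = a % e := by simp [Int.add_mul_emod_self_left]
  have h2 : (a + e) / e = a / e + 1 := by
    rw [Int.add_ediv_of_dvd_right ⟨1, (mul_one e).symm⟩, Int.ediv_self he.ne']
  rw [h1, h2]
  split <;> ring

lemma Ups_sub (e k a : ℤ) (he : 0 < e) : Ups e k (a - e) = Ups e k a - (e + 1) := by
  have := Ups_add e k (a - e) he
  simp at this
  omega

/-- `Υ`, applied coordinatewise, intertwines the negative `e`-action and the negative
`(e+1)`-action of the extended affine Weyl group on `ℤ^N`. -/
theorem stmt0 (e k : ℤ) (he : 1 < e) (hk0 : 0 ≤ k) (hk1 : k ≤ e - 1)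
    (N : ℕ) (hN : 2 ≤ N) (lam : Fin N → ℤ) :
    (∀ r : ℕ, ∀ _h1 : 1 ≤ r, ∀ _h2 : r ≤ N - 1,
      (fun i => Ups e k ((lam ∘ Equiv.swap (⟨r - 1, by omega⟩ : Fin N) ⟨r, by omega⟩) i)) =
        (fun i => Ups e k (lam i)) ∘ Equiv.swap (⟨r - 1, by omega⟩ : Fin N) ⟨r, by omega⟩) ∧
    ((fun i => Ups e k (sZero e lam i)) = sZero (e + 1) (fun i => Ups e k (lam i))) ∧
    ((fun i => Ups e k (piMap e lam i)) = piMap (e + 1) (fun i => Ups e k (lam i))) := by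
  have he' : (0:ℤ) < e := by omega
  refine ⟨?_, ?_, ?_⟩
  · intro r h1 h2
    funext i
    simp
  · funext i
    simp only [sZero]
    split
    · rw [Ups_sub e k _ he']
    · split
      · rw [Ups_add e k _ he']
      · rfl
  · funext i
    simp only [piMap]
    split
    · rfl
    · rw [Ups_add e k _ he']
end

section
/- Fix integers e > 1 and k with 0 ≤ k ≤ e−1, and let Υ act on ℤ^N coordinatewise. If λ ∈ ℤ^N is e-anti-dominant, i.e. λ_1 ≤ λ_2 ≤ ⋯ ≤ λ_N ≤ λ_1 + e, then Υ(λ) is (e+1)-anti-dominant, i.e. Υ(λ_1) ≤ Υ(λ_2) ≤ ⋯ ≤ Υ(λ_N) ≤ Υ(λ_1) + (e+1). (In particular Υ : ℤ → ℤ is strictly increasing and satisfies Υ(a + e) = Υ(a) + (e+1) for all a ∈ ℤ.) -/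
/-- A weight `λ ∈ ℤ^N` is `m`-anti-dominant if `λ_1 ≤ λ_2 ≤ ⋯ ≤ λ_N ≤ λ_1 + m`. -/
def IsAntiDominant (m : ℤ) {N : ℕ} (hN : 0 < N) (lam : Fin N → ℤ) : Prop :=
  (∀ i j : Fin N, i ≤ j → lam i ≤ lam j) ∧
    lam ⟨N - 1, Nat.sub_lt hN one_pos⟩ ≤ lam ⟨0, hN⟩ + m

section Ups

variable {e : ℤ} (k : ℤ)

lemma ups_mul_add {q b : ℤ} (hb0 : 0 ≤ b) (hbe : b < e) :
    Ups e k (q * e + b) = q * (e + 1) + b + if b ≤ k then 0 else 1 := by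
  have he : 0 < e := hb0.trans_lt hbe
  obtain ⟨hq, hb⟩ : (q * e + b) / e = q ∧ (q * e + b) % e = b :=
    (Int.ediv_emod_unique he).2 ⟨by ring, hb0, hbe⟩
  unfold Ups
  rw [hq, hb]
  split_ifs <;> ring

lemma ups_add_self (he : 0 < e) (a : ℤ) : Ups e k (a + e) = Ups e k a + (e + 1) := by
  have hb0 : 0 ≤ a % e := Int.emod_nonneg a he.ne'
  have hbe : a % e < e := Int.emod_lt_of_pos a he
  have hdecomp : a + e = (a / e + 1) * e + a % e := by
    linear_combination (Int.ediv_mul_add_emod a e).symm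
  rw [hdecomp, ups_mul_add k hb0 hbe]
  conv_rhs => rw [← Int.ediv_mul_add_emod a e, ups_mul_add k hb0 hbe]
  ring

lemma ups_lt_ups_add_one (he : 0 < e) (a : ℤ) : Ups e k a < Ups e k (a + 1) := by
  have hb0 : 0 ≤ a % e := Int.emod_nonneg a he.ne'
  have hbe : a % e < e := Int.emod_lt_of_pos a he
  rw [← Int.ediv_mul_add_emod a e, ups_mul_add k hb0 hbe]
  rcases (Int.add_one_le_iff.2 hbe).lt_or_eq with hlt | heq
  · rw [add_assoc (a / e * e), ups_mul_add k (by omega) hlt]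
    split_ifs <;> omega
  · have hnext : a / e * e + a % e + 1 = (a / e + 1) * e + 0 := by linear_combination heq
    rw [hnext, ups_mul_add k le_rfl he]
    split_ifs <;> linarith

lemma strictMono_ups (he : 0 < e) : StrictMono (Ups e k) :=
  strictMono_int_of_lt_succ (ups_lt_ups_add_one k he)

end Ups

lemma IsAntiDominant.comp_of_monotone {m m' : ℤ} {N : ℕ} {hN : 0 < N} {lam : Fin N → ℤ}
    {f : ℤ → ℤ} (hf : Monotone f) (hshift : ∀ x, f (x + m) ≤ f x + m')
    (h : IsAntiDominant m hN lam) : IsAntiDominant m' hN (fun i => f (lam i)) :=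
  ⟨fun i j hij => hf (h.1 i j hij), (hf h.2).trans (hshift _)⟩

theorem stmt1_general (e k : ℤ) (he : 1 < e)
    (N : ℕ) (hN : 0 < N) (lam : Fin N → ℤ) :
    StrictMono (Ups e k) ∧
    (∀ a : ℤ, Ups e k (a + e) = Ups e k a + (e + 1)) ∧
    (IsAntiDominant e hN lam → IsAntiDominant (e + 1) hN (fun i => Ups e k (lam i))) := by
  have he0 : 0 < e := zero_lt_one.trans he
  have hmono := strictMono_ups k he0
  refine ⟨hmono, ups_add_self k he0, ?_⟩
  exact IsAntiDominant.comp_of_monotone hmono.monotone (fun x => (ups_add_self k he0 x).le)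

/-- `Υ` is strictly increasing, satisfies `Υ(a+e) = Υ(a) + (e+1)`, and (applied
coordinatewise) sends `e`-anti-dominant weights to `(e+1)`-anti-dominant weights. -/
theorem stmt1 (e k : ℤ) (he : 1 < e) (hk0 : 0 ≤ k) (hk1 : k ≤ e - 1)
    (N : ℕ) (hN : 0 < N) (lam : Fin N → ℤ) :
    StrictMono (Ups e k) ∧
    (∀ a : ℤ, Ups e k (a + e) = Ups e k a + (e + 1)) ∧
    (IsAntiDominant e hN lam → IsAntiDominant (e + 1) hN (fun i => Ups e k (lam i))) :=
  stmt1_general e k he N hN lam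
end

section
/- Fix integers e > 1 and k with 0 ≤ k ≤ e−1, and let Υ act on ℤ^N coordinatewise. Let φ : Q_e → Q_{e+1} be the ℤ-linear map with φ(α_i) = α_i for 0 ≤ i ≤ k−1, φ(α_k) = α_k + α_{k+1}, and φ(α_i) = α_{i+1} for k+1 ≤ i ≤ e−1 (indices read in ℤ/eℤ and ℤ/(e+1)ℤ respectively via their representatives in {0,…,e−1} and {0,…,e}). Then for all λ¹, λ² ∈ ℤ^N and all q : ℤ/eℤ → ℤ: if wt^χ_e(λ¹) − wt^χ_e(λ²) = ι^χ_e(q), then wt^χ_{e+1}(Υ(λ¹)) − wt^χ_{e+1}(Υ(λ²)) = ι^χ_{e+1}(φ(q)). In other words, wt^χ_{e+1}(Υ(λ¹)) − wt^χ_{e+1}(Υ(λ²)) = φ(wt^χ_e(λ¹) − wt^χ_e(λ²)) under the identifications ι^χ. -/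
/-- `wt^χ_m(λ) = Σ_r ε_{λ_r mod m} + (Σ_r λ_r)·χ`, an element of the free abelian group
`X^χ_m` with basis `{ε_i : i ∈ ℤ/mℤ} ∪ {χ}`, realized as `(ZMod m → ℤ) × ℤ`. -/
def wtChi (m : ℕ) [NeZero m] {N : ℕ} (lam : Fin N → ℤ) : (ZMod m → ℤ) × ℤ :=
  (fun i => ((Finset.univ.filter fun r : Fin N => ((lam r : ZMod m) = i)).card : ℤ),
    ∑ r, lam r)

/-- The injective `ℤ`-linear map `ι^χ_m : Q_m → X^χ_m`, `α_i ↦ ε_i − ε_{i+1} − χ`. -/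
def iotaChi (m : ℕ) [NeZero m] (q : ZMod m → ℤ) : (ZMod m → ℤ) × ℤ :=
  (fun i => q i - q (i - 1), -(∑ i, q i))

/-- The `ℤ`-linear map `φ : Q_e → Q_{e+1}` with `φ(α_i) = α_i` for `0 ≤ i ≤ k−1`,
`φ(α_k) = α_k + α_{k+1}`, and `φ(α_i) = α_{i+1}` for `k+1 ≤ i ≤ e−1` (indices read via
their representatives in `{0,…,e−1}` resp. `{0,…,e}`), expressed on coefficients. -/
def phiMap (e k : ℕ) [NeZero e] (q : ZMod e → ℤ) : ZMod (e + 1) → ℤ := fun j =>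
  if j.val ≤ k then q ((j.val : ℕ) : ZMod e) else q ((j.val - 1 : ℕ) : ZMod e)

/-!
Write `wtOne m a = ε_{a mod m} + a χ`, so that `wt^χ_m(λ) = ∑_r wtOne m λ_r` and
`ι^χ_m(α_c) = wtOne m c - wtOne m (c + 1)` for `0 ≤ c < m`. Since
`Υ(a) = Υ(ā) + (e + 1)(a - ā)/e` with `ā = a mod e`, the assignment
`wtOne e a ↦ e • wtOne (e + 1) (Υ a)` extends to a `ℤ`-linear map
`Ψ = upsWtMap e k : X^χ_e → X^χ_{e+1}`, with `ε_b ↦ e • wtOne (e + 1) (Υ b) - (e + 1) b χ`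
and `χ ↦ (e + 1) χ`. Applying `Ψ` to the hypothesis, it remains to see
`Ψ ∘ ι^χ_e = e • ι^χ_{e+1} ∘ φ`. On `α_c` the left side is
`e • (wtOne (e + 1) (Υ c) - wtOne (e + 1) (Υ (c + 1)))`, and `Υ` sends `c, c + 1` to
consecutive integers except at `c = k`, where it skips `k + 1`: this is why
`φ(α_k) = α_k + α_{k+1}`. Finally cancel `e`.
-/

open Finset

def wtOne (m : ℕ) (a : ℤ) : (ZMod m → ℤ) × ℤ := (Pi.single (a : ZMod m) 1, a)

lemma wtOne_add_mul (m : ℕ) (a t : ℤ) : wtOne m (a + m * t) = wtOne m a + (0, m * t) := by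
  ext <;> simp [wtOne]

lemma wtChi_eq_sum_wtOne (m : ℕ) [NeZero m] {N : ℕ} (lam : Fin N → ℤ) :
    wtChi m lam = ∑ r, wtOne m (lam r) := by
  ext i
  · simp only [wtChi, wtOne, natCast_card_filter, Prod.fst_sum, Finset.sum_apply, Pi.single_apply,
      eq_comm]
  · simp [wtChi, wtOne, Prod.snd_sum]

lemma sum_range_eq_sum_zmod_val {M : Type*} [AddCommMonoid M] (m : ℕ) [NeZero m] (g : ℕ → M) :
    ∑ c ∈ range m, g c = ∑ i : ZMod m, g i.val :=
  sum_nbij' (fun c => c) (fun i => i.val)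
    (fun _ _ => mem_univ _) (fun i _ => mem_range.2 (ZMod.val_lt i))
    (fun c hc => ZMod.val_cast_of_lt (mem_range.1 hc)) (fun i _ => ZMod.natCast_zmod_val i)
    (fun c hc => by rw [ZMod.val_cast_of_lt (mem_range.1 hc)])

lemma iotaChi_eq_sum_range (m : ℕ) [NeZero m] (q : ZMod m → ℤ) :
    iotaChi m q = ∑ c ∈ range m, q c • (wtOne m c - wtOne m (c + 1 : ℕ)) := by
  rw [sum_range_eq_sum_zmod_val]
  ext j
  · have hshift (x : ZMod m) : j = x + 1 ↔ x = j - 1 := by rw [eq_sub_iff_add_eq, eq_comm]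
    simp [iotaChi, wtOne, Prod.fst_sum, Finset.sum_apply, Pi.single_apply, mul_sub,
      sum_sub_distrib, hshift]
  · simp [iotaChi, wtOne, Prod.snd_sum]

def upsNat (k c : ℕ) : ℕ := if c ≤ k then c else c + 1

lemma Ups_eq_ediv_mul_add_Ups_emod {e : ℤ} (he : 0 < e) (k a : ℤ) :
    Ups e k a = a / e * (e + 1) + Ups e k (a % e) := by
  have hdiv : a % e / e = 0 :=
    Int.ediv_eq_zero_of_lt (Int.emod_nonneg a he.ne') (Int.emod_lt_of_pos a he)
  simp only [Ups, Int.emod_emod, hdiv]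
  split_ifs <;> ring

lemma Ups_natCast {e k c : ℕ} (hk : k < e) (hc : c ≤ e) : Ups e k c = upsNat k c := by
  rcases hc.lt_or_eq with hc | rfl
  · have hmod : (c : ℤ) % e = c := Int.emod_eq_of_lt (by positivity) (by exact_mod_cast hc)
    have hdiv : (c : ℤ) / e = 0 := Int.ediv_eq_zero_of_lt (by positivity) (by exact_mod_cast hc)
    simp only [Ups, upsNat, hmod, hdiv]
    split_ifs <;> omega
  · simp [Ups, upsNat, Int.ediv_self (show (c : ℤ) ≠ 0 by omega), show ¬ c ≤ k by omega]

lemma sum_range_upsNat {G : Type*} [AddCommGroup G] (g : ℕ → ℤ) (f : ℕ → G) {k e : ℕ}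
    (hk : k < e) :
    ∑ c ∈ range e, g c • (f (upsNat k c) - f (upsNat k (c + 1))) =
      ∑ c ∈ range (e + 1), (if c ≤ k then g c else g (c - 1)) • (f c - f (c + 1)) := by
  induction e, hk using Nat.le_induction with
  | base =>
    have hlow : ∀ c ∈ range k, g c • (f (upsNat k c) - f (upsNat k (c + 1))) =
        (if c ≤ k then g c else g (c - 1)) • (f c - f (c + 1)) := fun c hc => by
      have := mem_range.1 hc
      simp [upsNat, show c ≤ k by omega, show c + 1 ≤ k by omega]
    rw [sum_range_succ, sum_range_succ, sum_range_succ, sum_congr rfl hlow]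
    simp only [upsNat, le_refl, if_true, show ¬ k + 1 ≤ k by omega, if_false, Nat.add_sub_cancel]
    module
  | succ e hke ih =>
    rw [sum_range_succ, ih, sum_range_succ _ (e + 1)]
    simp [upsNat, show ¬ e ≤ k by omega, show ¬ e + 1 ≤ k by omega]

section upsWtMap

variable (e k : ℕ) [NeZero e]

def upsWtMap : (ZMod e → ℤ) × ℤ →ₗ[ℤ] (ZMod (e + 1) → ℤ) × ℤ :=
  (Fintype.linearCombination ℤ fun b : ZMod e =>
      (e : ℤ) • wtOne (e + 1) (Ups e k b.val) - (0, ((e : ℤ) + 1) * b.val)).coprod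
    (LinearMap.toSpanSingleton ℤ _ (0, (e : ℤ) + 1))

lemma upsWtMap_wtOne (a : ℤ) :
    upsWtMap e k (wtOne e a) = (e : ℤ) • wtOne (e + 1) (Ups e k a) := by
  have hval : ((a : ZMod e).val : ℤ) = a % e := ZMod.val_intCast a
  have hUps : Ups e k a = Ups e k ((a : ZMod e).val) + ((e + 1 : ℕ) : ℤ) * (a / e) := by
    rw [Ups_eq_ediv_mul_add_Ups_emod (by simp [Nat.pos_of_neZero]), hval]
    push_cast
    ring
  rw [hUps, wtOne_add_mul]
  unfold wtOne
  rw [upsWtMap, LinearMap.coprod_apply, Fintype.linearCombination_apply_single,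
    LinearMap.toSpanSingleton_apply, one_smul, smul_add]
  ext
  · simp [wtOne]
  · simp only [wtOne, Prod.snd_add, Prod.snd_sub, Prod.smul_snd, smul_eq_mul, hval]
    push_cast
    linear_combination -(↑e + 1) * Int.emod_add_mul_ediv a e

lemma upsWtMap_wtChi {N : ℕ} (lam : Fin N → ℤ) :
    upsWtMap e k (wtChi e lam) = (e : ℤ) • wtChi (e + 1) (fun r => Ups e k (lam r)) := by
  simp only [wtChi_eq_sum_wtOne, map_sum, upsWtMap_wtOne, smul_sum]

lemma phiMap_natCast (q : ZMod e → ℤ) {c : ℕ} (hc : c < e + 1) :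
    phiMap e k q c = if c ≤ k then q c else q (c - 1 : ℕ) := by
  simp only [phiMap, ZMod.val_cast_of_lt hc]

lemma upsWtMap_iotaChi (hk : k < e) (q : ZMod e → ℤ) :
    upsWtMap e k (iotaChi e q) = (e : ℤ) • iotaChi (e + 1) (phiMap e k q) := by
  set f : ℕ → (ZMod (e + 1) → ℤ) × ℤ := fun c => wtOne (e + 1) c
  have hterm : ∀ c ∈ range e, upsWtMap e k (q c • (wtOne e c - wtOne e (c + 1 : ℕ))) =
      (e : ℤ) • (q c • (f (upsNat k c) - f (upsNat k (c + 1)))) := fun c hc => by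
    have := mem_range.1 hc
    rw [map_zsmul, map_sub, upsWtMap_wtOne, upsWtMap_wtOne, Ups_natCast hk (by omega),
      Ups_natCast hk (by omega), ← smul_sub, smul_comm]
  have hphi : ∀ c ∈ range (e + 1),
      (if c ≤ k then q c else q (c - 1 : ℕ)) • (f c - f (c + 1)) =
        phiMap e k q c • (wtOne (e + 1) c - wtOne (e + 1) (c + 1 : ℕ)) := fun c hc => by
    rw [phiMap_natCast e k q (mem_range.1 hc)]
  rw [iotaChi_eq_sum_range, iotaChi_eq_sum_range, map_sum, sum_congr rfl hterm, ← smul_sum,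
    sum_range_upsNat (fun c => q c) f hk, sum_congr rfl hphi]

end upsWtMap

theorem stmt4_general (e k : ℕ) [NeZero e] (hk : k ≤ e - 1)
    (N : ℕ) (lam₁ lam₂ : Fin N → ℤ) (q : ZMod e → ℤ)
    (h : wtChi e lam₁ - wtChi e lam₂ = iotaChi e q) :
    wtChi (e + 1) (fun i => Ups (e : ℤ) (k : ℤ) (lam₁ i)) -
        wtChi (e + 1) (fun i => Ups (e : ℤ) (k : ℤ) (lam₂ i)) =
      iotaChi (e + 1) (phiMap e k q) := by
  have hke : k < e := by have := NeZero.pos e; omega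
  have he : (e : ℤ) ≠ 0 := mod_cast NeZero.ne e
  have key := congrArg (upsWtMap e k) h
  rw [map_sub, upsWtMap_wtChi, upsWtMap_wtChi, upsWtMap_iotaChi e k hke, ← smul_sub] at key
  exact smul_right_injective _ he key

/-- If `wt^χ_e(λ¹) − wt^χ_e(λ²) = ι^χ_e(q)` then
`wt^χ_{e+1}(Υλ¹) − wt^χ_{e+1}(Υλ²) = ι^χ_{e+1}(φ(q))`. -/
theorem stmt4 (e k : ℕ) [NeZero e] (he : 1 < e) (hk : k ≤ e - 1)
    (N : ℕ) (lam₁ lam₂ : Fin N → ℤ) (q : ZMod e → ℤ)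
    (h : wtChi e lam₁ - wtChi e lam₂ = iotaChi e q) :
    wtChi (e + 1) (fun i => Ups (e : ℤ) (k : ℤ) (lam₁ i)) -
        wtChi (e + 1) (fun i => Ups (e : ℤ) (k : ℤ) (lam₂ i)) =
      iotaChi (e + 1) (phiMap e k q) :=
  stmt4_general e k hk N lam₁ lam₂ q h
end

section
/- Fix integers e ≥ 2 and k with 0 ≤ k ≤ e−1. Then the linear map Θ intertwines the lowering operators of the embedding of affine sl_e into affine sl_{e+1}: (i) Θ ∘ F_r^{(e)} = F_r^{(e+1)} ∘ Θ for each r ∈ {0,…,k−1}; (ii) Θ ∘ F_k^{(e)} = (F_{k+1}^{(e+1)} ∘ F_k^{(e+1)} − F_k^{(e+1)} ∘ F_{k+1}^{(e+1)}) ∘ Θ; (iii) Θ ∘ F_r^{(e)} = F_{r+1}^{(e+1)} ∘ Θ for each r ∈ {k+1,…,e−1} (indices for the operators F^{(e)} are taken in ℤ/eℤ and for F^{(e+1)} in ℤ/(e+1)ℤ). -/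
/-- The operator `F_i^{(m)}` on `U = ⊕_{r ∈ ℤ} ℂ·u_r`: `F_i^{(m)}(u_r) = u_{r+1}` if
`r ≡ i (mod m)` and `0` otherwise. -/
noncomputable def Fop (m : ℕ) (i : ZMod m) : (ℤ →₀ ℂ) →ₗ[ℂ] (ℤ →₀ ℂ) :=
  Finsupp.lsum ℂ fun r : ℤ =>
    if ((r : ZMod m) = i) then Finsupp.lsingle (r + 1) else 0

/-- The `ℂ`-linear map `Θ : U → U` with `Θ(u_r) = u_{Υ(r)}`. -/
noncomputable def Theta (e k : ℕ) : (ℤ →₀ ℂ) →ₗ[ℂ] (ℤ →₀ ℂ) :=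
  Finsupp.lmapDomain ℂ ℂ fun r : ℤ => Ups (e : ℤ) (k : ℤ) r

theorem Ups_mul_add (k : ℤ) {e b : ℤ} (a : ℤ) (hb₀ : 0 ≤ b) (hbe : b < e) :
    Ups e k (e * a + b) = (e + 1) * a + b + if b ≤ k then 0 else 1 := by
  have hmod : (e * a + b) % e = b := by
    rw [Int.mul_add_emod_self_left, Int.emod_eq_of_lt hb₀ hbe]
  have hdiv : (e * a + b) / e = a := by
    rw [Int.mul_add_ediv_left _ _ (by omega), Int.ediv_eq_zero_of_lt hb₀ hbe, add_zero]
  simp only [Ups, hmod, hdiv]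
  split_ifs <;> ring

theorem Ups_emod (k : ℤ) {e : ℤ} (he : 0 < e) (r : ℤ) :
    Ups e k r % (e + 1) = r % e + if r % e ≤ k then 0 else 1 := by
  have hb₀ := Int.emod_nonneg r he.ne'
  have hbe := Int.emod_lt_of_pos r he
  have h := Ups_mul_add k (r / e) hb₀ hbe
  rw [Int.mul_ediv_add_emod] at h
  rw [h, add_assoc, Int.mul_add_emod_self_left, Int.emod_eq_of_lt (by split_ifs <;> omega)
    (by split_ifs <;> omega)]

theorem Ups_add_one {e k : ℤ} (hk₀ : 0 ≤ k) (hke : k < e) (r : ℤ) :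
    Ups e k (r + 1) = Ups e k r + if r % e = k then 2 else 1 := by
  have hb₀ := Int.emod_nonneg r (by omega : e ≠ 0)
  have hbe := Int.emod_lt_of_pos r (by omega : 0 < e)
  have hr := Int.mul_ediv_add_emod r e
  have h := Ups_mul_add k (r / e) hb₀ hbe
  rw [hr] at h
  rw [h]
  by_cases hlast : r % e + 1 < e
  · have h₁ := Ups_mul_add k (r / e) (by omega) hlast
    rw [← add_assoc, hr] at h₁
    rw [h₁]
    split_ifs <;> omega
  · have h₁ := Ups_mul_add k (r / e + 1) le_rfl (by omega : 0 < e)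
    rw [show e * (r / e + 1) + 0 = r + 1 by linarith, mul_add_one] at h₁
    rw [h₁]
    split_ifs <;> omega


theorem ZMod.intCast_eq_natCast_iff_emod (x : ℤ) {n t : ℕ} (ht : t < n) :
    (x : ZMod n) = t ↔ x % n = t := by
  rw [← Int.cast_natCast, ZMod.intCast_eq_intCast_iff',
    Int.emod_eq_of_lt (Int.natCast_nonneg t) (by exact_mod_cast ht)]

section UpsResidues

variable {e k : ℕ} (r : ℤ)

theorem Ups_cast_eq_iff_of_le {t : ℕ} (htk : t ≤ k) (hte : t < e) :
    (Ups e k r : ZMod (e + 1)) = t ↔ (r : ZMod e) = t := by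
  have hb₀ := Int.emod_nonneg r (by omega : (e : ℤ) ≠ 0)
  rw [ZMod.intCast_eq_natCast_iff_emod _ (by omega), ZMod.intCast_eq_natCast_iff_emod _ hte]
  push_cast
  rw [Ups_emod k (by omega)]
  split_ifs <;> omega

theorem Ups_cast_eq_iff_of_lt {t : ℕ} (hkt : k < t) (hte : t < e) :
    (Ups e k r : ZMod (e + 1)) = (t + 1 : ℕ) ↔ (r : ZMod e) = t := by
  have hb₀ := Int.emod_nonneg r (by omega : (e : ℤ) ≠ 0)
  rw [ZMod.intCast_eq_natCast_iff_emod _ (by omega), ZMod.intCast_eq_natCast_iff_emod _ hte]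
  push_cast
  rw [Ups_emod k (by omega)]
  split_ifs <;> omega

theorem Ups_cast_ne_succ (hke : k < e) : (Ups e k r : ZMod (e + 1)) ≠ (k + 1 : ℕ) := by
  have hb₀ := Int.emod_nonneg r (by omega : (e : ℤ) ≠ 0)
  rw [Ne, ZMod.intCast_eq_natCast_iff_emod _ (by omega)]
  push_cast
  rw [Ups_emod k (by omega)]
  split_ifs <;> omega

theorem Ups_add_one_of_cast_eq_of_ne (hke : k < e) {t : ℕ} (hte : t < e) (htk : t ≠ k)
    (hr : (r : ZMod e) = t) : Ups e k (r + 1) = Ups e k r + 1 := by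
  rw [ZMod.intCast_eq_natCast_iff_emod _ hte] at hr
  rw [Ups_add_one (by omega) (by omega), if_neg (by omega)]

theorem Ups_add_one_of_cast_eq (hke : k < e) (hr : (r : ZMod e) = k) :
    Ups e k (r + 1) = Ups e k r + 2 := by
  rw [ZMod.intCast_eq_natCast_iff_emod _ hke] at hr
  rw [Ups_add_one (by omega) (by omega), if_pos hr]

end UpsResidues

section Intertwining

variable {m n : ℕ} {i : ZMod m} {j : ZMod n} {f : ℤ → ℤ}

theorem Fop_single (r : ℤ) (c : ℂ) :
    Fop m i (Finsupp.single r c) =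
      if (r : ZMod m) = i then Finsupp.single (r + 1) c else 0 := by
  rw [Fop, Finsupp.lsum_single]
  split_ifs <;> simp

theorem lmapDomain_comp_Fop (hf : ∀ r, (f r : ZMod n) = j ↔ (r : ZMod m) = i)
    (hsucc : ∀ r : ℤ, (r : ZMod m) = i → f (r + 1) = f r + 1) :
    Finsupp.lmapDomain ℂ ℂ f ∘ₗ Fop m i = Fop n j ∘ₗ Finsupp.lmapDomain ℂ ℂ f := by
  refine Finsupp.lhom_ext fun r c => ?_
  by_cases hr : (r : ZMod m) = i
  · simp [Fop_single, hr, (hf r).2 hr, hsucc r hr]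
  · simp [Fop_single, hr, mt (hf r).1 hr]

theorem lmapDomain_comp_Fop_eq_commutator_comp
    (hf : ∀ r, (f r : ZMod n) = j ↔ (r : ZMod m) = i) (hmiss : ∀ r, (f r : ZMod n) ≠ j + 1)
    (hsucc : ∀ r : ℤ, (r : ZMod m) = i → f (r + 1) = f r + 2) :
    Finsupp.lmapDomain ℂ ℂ f ∘ₗ Fop m i =
      (Fop n (j + 1) ∘ₗ Fop n j - Fop n j ∘ₗ Fop n (j + 1)) ∘ₗ Finsupp.lmapDomain ℂ ℂ f := by
  refine Finsupp.lhom_ext fun r c => ?_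
  by_cases hr : (r : ZMod m) = i
  · have hj : (f r : ZMod n) = j := (hf r).2 hr
    have hn : (1 : ZMod n) ≠ 0 := by simpa [hj] using hmiss r
    simp [Fop_single, hr, hj, hn, hsucc r hr, add_assoc, one_add_one_eq_two]
  · simp [Fop_single, hr, mt (hf r).1 hr, hmiss r]

end Intertwining

/-- `Θ` intertwines the lowering operators of the embedding `sl̃_e ⊆ sl̃_{e+1}`. -/
theorem stmt5 (e k : ℕ) (he : 2 ≤ e) (hk : k ≤ e - 1) :
    (∀ r : ℕ, r < k →
      Theta e k ∘ₗ Fop e ((r : ℕ) : ZMod e) =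
        Fop (e + 1) ((r : ℕ) : ZMod (e + 1)) ∘ₗ Theta e k) ∧
    (Theta e k ∘ₗ Fop e ((k : ℕ) : ZMod e) =
      (Fop (e + 1) (((k + 1 : ℕ)) : ZMod (e + 1)) ∘ₗ Fop (e + 1) ((k : ℕ) : ZMod (e + 1)) -
          Fop (e + 1) ((k : ℕ) : ZMod (e + 1)) ∘ₗ
            Fop (e + 1) (((k + 1 : ℕ)) : ZMod (e + 1))) ∘ₗ Theta e k) ∧
    (∀ r : ℕ, k + 1 ≤ r → r ≤ e - 1 →
      Theta e k ∘ₗ Fop e ((r : ℕ) : ZMod e) =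
        Fop (e + 1) (((r + 1 : ℕ)) : ZMod (e + 1)) ∘ₗ Theta e k) := by
  have hke : k < e := by omega
  refine ⟨fun t htk => ?_, ?_, fun t hkt hte => ?_⟩
  · exact lmapDomain_comp_Fop (fun r => Ups_cast_eq_iff_of_le r htk.le (by omega))
      (fun r => Ups_add_one_of_cast_eq_of_ne r hke (by omega) htk.ne)
  · rw [Nat.cast_succ]
    exact lmapDomain_comp_Fop_eq_commutator_comp (fun r => Ups_cast_eq_iff_of_le r le_rfl hke)
      (fun r => by exact_mod_cast Ups_cast_ne_succ r hke) (fun r => Ups_add_one_of_cast_eq r hke)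
  · exact lmapDomain_comp_Fop (fun r => Ups_cast_eq_iff_of_lt r hkt (by omega))
      (fun r => Ups_add_one_of_cast_eq_of_ne r hke (by omega) (by omega))
end

section
/- Let C and D be abelian categories, i : D ⥤ C an additive fully faithful exact functor, and τ : C ⥤ D a left adjoint of i such that for every object M of C the unit morphism η_M : M ⟶ i(τ(M)) is an epimorphism. Let L be a simple object of D, let P be a projective object of C, and let p : P ⟶ i(L) be an essential epimorphism (i.e. p is an epimorphism such that for every morphism g : Q ⟶ P, if g ≫ p is an epimorphism then g is an epimorphism). Then τ(P) is a projective object of D and the morphism p̄ : τ(P) ⟶ L corresponding to p under the adjunction τ ⊣ i is an essential epimorphism; i.e. τ(P) is a projective cover of L in D. -/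
open CategoryTheory CategoryTheory.Limits

/-- An epimorphism `p : P ⟶ L` is essential if every morphism `g : Q ⟶ P` whose
composition with `p` is an epimorphism is itself an epimorphism. -/
def IsEssentialEpi {C : Type*} [Category C] {P L : C} (p : P ⟶ L) : Prop :=
  Epi p ∧ ∀ ⦃Q : C⦄ (g : Q ⟶ P), Epi (g ≫ p) → Epi g

/-- If `i : D ⥤ C` is an additive fully faithful exact functor between abelian
categories with a left adjoint `τ` whose unit is an epimorphism on every object, `L` is
simple in `D`, `P` is projective in `C` and `p : P ⟶ i(L)` is a projective cover, then
`τ(P)` together with the adjunct morphism `τ(P) ⟶ L` is a projective cover of `L`. -/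
theorem stmt9 {C D : Type*} [Category C] [Category D] [Abelian C] [Abelian D]
    (i : D ⥤ C) [i.Full] [i.Faithful] [i.Additive]
    [PreservesFiniteLimits i] [PreservesFiniteColimits i]
    (τ : C ⥤ D) (adj : τ ⊣ i)
    (hunit : ∀ M : C, Epi (adj.unit.app M))
    (L : D) [Simple L] (P : C) [Projective P]
    (p : P ⟶ i.obj L) (hp : IsEssentialEpi p) :
    Projective (τ.obj P) ∧ IsEssentialEpi ((adj.homEquiv P L).symm p) := by
  obtain ⟨hpe, hpess⟩ := hp
  have hi : i.PreservesEpimorphisms := inferInstance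
  have hτ : PreservesColimits τ := adj.leftAdjoint_preservesColimits
  have hτe : τ.PreservesEpimorphisms := inferInstance
  have hciso : IsIso adj.counit := adj.counit_isIso_of_R_fully_faithful
  refine ⟨adj.map_projective P inferInstance, ?_, ?_⟩
  · -- p̄ = τ.map p ≫ counit, both epi
    rw [Adjunction.homEquiv_counit]
    have h1 : Epi (τ.map p) := τ.map_epi p
    have h2 : Epi (adj.counit.app L) := inferInstance
    exact epi_comp _ _
  · intro Q g hg
    -- p = unit ≫ i.map p̄
    have hpeq : p = adj.unit.app P ≫ i.map ((adj.homEquiv P L).symm p) := by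
      have := (adj.homEquiv P L).apply_symm_apply p
      rw [Adjunction.homEquiv_unit] at this
      exact this.symm
    set pbar := (adj.homEquiv P L).symm p with hpbar
    -- pullback of unit along i.map g
    have hη : Epi (adj.unit.app P) := hunit P
    let T := pullback (adj.unit.app P) (i.map g)
    have hsnd : Epi (pullback.snd (adj.unit.app P) (i.map g)) := inferInstance
    have hcomm : pullback.fst (adj.unit.app P) (i.map g) ≫ adj.unit.app P
        = pullback.snd (adj.unit.app P) (i.map g) ≫ i.map g := pullback.condition
    have hfp : Epi (pullback.fst (adj.unit.app P) (i.map g) ≫ p) := by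
      rw [hpeq, ← Category.assoc, hcomm, Category.assoc, ← i.map_comp]
      have : Epi (i.map (g ≫ pbar)) := i.map_epi _
      exact epi_comp _ _
    have hfst : Epi (pullback.fst (adj.unit.app P) (i.map g)) := hpess _ hfp
    have : Epi (pullback.snd (adj.unit.app P) (i.map g) ≫ i.map g) := by
      rw [← hcomm]; exact epi_comp _ _
    have : Epi (i.map g) := epi_of_epi (pullback.snd (adj.unit.app P) (i.map g)) _
    exact i.epi_of_epi_map this
end

section
/- Let C₁ and C₂ be abelian categories with enough projectives in which every object has finite projective dimension (i.e. admits a projective resolution of finite length). Let E : C₁ ⥤ C₂ and F : C₂ ⥤ C₁ be exact functors which send projective objects to projective objects, and let E' : Proj(C₁) ⥤ Proj(C₂) and F' : Proj(C₂) ⥤ Proj(C₁) denote their restrictions to the full subcategories of projective objects. If the pair (E', F') is adjoint (E' is left adjoint to F'), then the pair (E, F) is adjoint (E is left adjoint to F). -/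
/-!
Every object `X` is the cokernel of `P₁ ⟶ P₀` with `P₀, P₁` projective, and a right exact
functor preserves this cokernel. Hence a natural transformation between the restrictions to
projectives of a right exact functor and an arbitrary (zero-preserving) functor extends to the
whole category; and since a right exact functor preserves the epimorphisms `P₀ ⟶ X`, such a
transformation is determined by its components at projectives. Extending the unit and counit of
the restricted adjunction this way, the triangle identities hold on projectives, hence everywhere.
-/

open CategoryTheory CategoryTheory.Limits

/-- An object `X` of an abelian category has finite projective dimension if it admits a
projective resolution of finite length. -/
def HasFiniteProjDim {C : Type*} [Category C] [Abelian C] (X : C) : Prop :=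
  ∃ (res : ProjectiveResolution X) (n : ℕ), ∀ i : ℕ, n < i → IsZero (res.complex.X i)

namespace CategoryTheory

variable {C D : Type*} [Category C] [Category D]

theorem NatTrans.ext_of_projective [EnoughProjectives C] {G H : C ⥤ D} [G.PreservesEpimorphisms]
    {β β' : G ⟶ H} (h : ∀ P, Projective P → β.app P = β'.app P) : β = β' := by
  ext X
  rw [← cancel_epi (G.map (Projective.π X)), β.naturality, β'.naturality,
    h _ (Projective.projective_over X)]

noncomputable def Projective.isColimitMapCokernelCoforkπ [Abelian C] [EnoughProjectives C]
    [Abelian D] (G : C ⥤ D) [PreservesFiniteColimits G] (X : C) :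
    IsColimit ((CokernelCofork.ofπ (Projective.π X) (kernel.condition _)).map G) :=
  CokernelCofork.mapIsColimit _
    (ShortComplex.exact_of_f_is_kernel (.mk _ _ (kernel.condition (Projective.π X)))
      (kernelIsKernel _)).gIsCokernel G

section

variable {G H : C ⥤ D} (α : ObjectProperty.ι (fun X : C => Projective X) ⋙ G ⟶
    ObjectProperty.ι (fun X : C => Projective X) ⋙ H)

theorem NatTrans.naturality_of_projective {P P' : C} (hP : Projective P) (hP' : Projective P')
    (f : P ⟶ P') : G.map f ≫ α.app ⟨P', hP'⟩ = α.app ⟨P, hP⟩ ≫ H.map f :=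
  α.naturality (X := ⟨P, hP⟩) (Y := ⟨P', hP'⟩) (ObjectProperty.homMk f)

variable [Abelian C] [EnoughProjectives C] [Abelian D] [PreservesFiniteColimits G]
  [H.PreservesZeroMorphisms]

noncomputable def NatTrans.extendFromProjectivesApp (X : C) : G.obj X ⟶ H.obj X :=
  Cofork.IsColimit.desc (Projective.isColimitMapCokernelCoforkπ G X)
    (α.app ⟨_, Projective.projective_over X⟩ ≫ H.map (Projective.π X))
    (by
      -- `kernel (π X)` need not be projective: test on its projective cover instead.
      rw [zero_comp, ← cancel_epi (G.map (Projective.π (kernel (Projective.π X)))), comp_zero,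
        ← Functor.map_comp_assoc, ← Category.assoc,
        naturality_of_projective α (Projective.projective_over _), Category.assoc,
        ← H.map_comp, Category.assoc, kernel.condition, comp_zero, H.map_zero, comp_zero])

theorem NatTrans.map_π_comp_extendFromProjectivesApp (X : C) :
    G.map (Projective.π X) ≫ extendFromProjectivesApp α X =
      α.app ⟨_, Projective.projective_over X⟩ ≫ H.map (Projective.π X) :=
  Cofork.IsColimit.π_desc' (Projective.isColimitMapCokernelCoforkπ G X) _ _

noncomputable def NatTrans.extendFromProjectives : G ⟶ H where
  app := extendFromProjectivesApp α
  naturality X Y f := by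
    let u := Projective.factorThru (Projective.π X ≫ f) (Projective.π Y)
    have hu : u ≫ Projective.π Y = Projective.π X ≫ f := Projective.factorThru_comp _ _
    rw [← cancel_epi (G.map (Projective.π X))]
    calc G.map (Projective.π X) ≫ G.map f ≫ extendFromProjectivesApp α Y
        = G.map u ≫ G.map (Projective.π Y) ≫ extendFromProjectivesApp α Y := by
          rw [← Functor.map_comp_assoc, ← Functor.map_comp_assoc, hu]
      _ = α.app ⟨_, Projective.projective_over X⟩ ≫ H.map (Projective.π X ≫ f) := by
          rw [map_π_comp_extendFromProjectivesApp, ← Category.assoc,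
            naturality_of_projective α (Projective.projective_over X), Category.assoc,
            ← H.map_comp, hu]
      _ = G.map (Projective.π X) ≫ extendFromProjectivesApp α X ≫ H.map f := by
          rw [← Category.assoc, map_π_comp_extendFromProjectivesApp, H.map_comp, Category.assoc]

theorem NatTrans.extendFromProjectives_app_of_projective (P : C) (hP : Projective P) :
    (extendFromProjectives α).app P = α.app ⟨P, hP⟩ := by
  rw [← cancel_epi (G.map (Projective.π P))]
  exact (map_π_comp_extendFromProjectivesApp α P).trans (naturality_of_projective α _ hP _).symm

end

section

variable {C₁ C₂ : Type*} [Category C₁] [Category C₂] [Abelian C₁] [Abelian C₂]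
  [EnoughProjectives C₁] [EnoughProjectives C₂] {E : C₁ ⥤ C₂} {F : C₂ ⥤ C₁}
  [PreservesFiniteColimits E] [PreservesFiniteColimits F]
  {hE : ∀ X : C₁, Projective X → Projective (E.obj X)}
  {hF : ∀ Y : C₂, Projective Y → Projective (F.obj Y)}

noncomputable def Adjunction.ofProjectives
    (A : ObjectProperty.lift (fun Y : C₂ => Projective Y)
          (ObjectProperty.ι (fun X : C₁ => Projective X) ⋙ E)
          (fun X => hE X.obj X.property) ⊣
        ObjectProperty.lift (fun X : C₁ => Projective X)
          (ObjectProperty.ι (fun Y : C₂ => Projective Y) ⋙ F)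
          (fun Y => hF Y.obj Y.property)) : E ⊣ F :=
  Adjunction.mkOfUnitCounit
    { unit := NatTrans.extendFromProjectives (Functor.whiskerRight A.unit (ObjectProperty.ι _))
      counit := NatTrans.extendFromProjectives (Functor.whiskerRight A.counit (ObjectProperty.ι _))
      left_triangle := NatTrans.ext_of_projective fun P hP => by
        have h := (ObjectProperty.ι _).congr_map (A.left_triangle_components ⟨P, hP⟩)
        rw [Functor.map_comp, Functor.map_id] at h
        simp only [NatTrans.comp_app, Functor.whiskerRight_app, Functor.whiskerLeft_app,
          Functor.associator_hom_app, Functor.comp_obj, Category.id_comp,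
          NatTrans.extendFromProjectives_app_of_projective _ _ hP]
        rw [NatTrans.extendFromProjectives_app_of_projective _ _ (hE P hP)]
        exact h
      right_triangle := NatTrans.ext_of_projective fun Q hQ => by
        have h := (ObjectProperty.ι _).congr_map (A.right_triangle_components ⟨Q, hQ⟩)
        rw [Functor.map_comp, Functor.map_id] at h
        simp only [NatTrans.comp_app, Functor.whiskerRight_app, Functor.whiskerLeft_app,
          Functor.associator_inv_app, Functor.comp_obj, Category.id_comp,
          NatTrans.extendFromProjectives_app_of_projective _ _ hQ]
        rw [NatTrans.extendFromProjectives_app_of_projective _ _ (hF Q hQ)]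
        exact h }

end

end CategoryTheory

theorem stmt10_general {C₁ C₂ : Type*} [Category C₁] [Category C₂] [Abelian C₁] [Abelian C₂]
    [EnoughProjectives C₁] [EnoughProjectives C₂]
    (E : C₁ ⥤ C₂) (F : C₂ ⥤ C₁)
    [PreservesFiniteColimits E] [PreservesFiniteColimits F]
    (hE : ∀ X : C₁, Projective X → Projective (E.obj X))
    (hF : ∀ Y : C₂, Projective Y → Projective (F.obj Y))
    (hadj : Nonempty
      (ObjectProperty.lift (fun Y : C₂ => Projective Y)
          (ObjectProperty.ι (fun X : C₁ => Projective X) ⋙ E)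
          (fun X => hE X.obj X.property) ⊣
        ObjectProperty.lift (fun X : C₁ => Projective X)
          (ObjectProperty.ι (fun Y : C₂ => Projective Y) ⋙ F)
          (fun Y => hF Y.obj Y.property))) :
    Nonempty (E ⊣ F) := by
  exact hadj.map Adjunction.ofProjectives

/-- If `C₁`, `C₂` are abelian categories with enough projectives in which every object
has finite projective dimension, `E : C₁ ⥤ C₂` and `F : C₂ ⥤ C₁` are exact functors
preserving projective objects, and the restrictions `E'`, `F'` of `E`, `F` to the full
subcategories of projective objects form an adjoint pair `(E', F')`, then `(E, F)` is an
adjoint pair. -/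
theorem stmt10 {C₁ C₂ : Type*} [Category C₁] [Category C₂] [Abelian C₁] [Abelian C₂]
    [EnoughProjectives C₁] [EnoughProjectives C₂]
    (hdim₁ : ∀ X : C₁, HasFiniteProjDim X) (hdim₂ : ∀ Y : C₂, HasFiniteProjDim Y)
    (E : C₁ ⥤ C₂) (F : C₂ ⥤ C₁)
    [PreservesFiniteLimits E] [PreservesFiniteColimits E]
    [PreservesFiniteLimits F] [PreservesFiniteColimits F]
    (hE : ∀ X : C₁, Projective X → Projective (E.obj X))
    (hF : ∀ Y : C₂, Projective Y → Projective (F.obj Y))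
    (hadj : Nonempty
      (ObjectProperty.lift (fun Y : C₂ => Projective Y)
          (ObjectProperty.ι (fun X : C₁ => Projective X) ⋙ E)
          (fun X => hE X.obj X.property) ⊣
        ObjectProperty.lift (fun X : C₁ => Projective X)
          (ObjectProperty.ι (fun Y : C₂ => Projective Y) ⋙ F)
          (fun Y => hF Y.obj Y.property))) :
    Nonempty (E ⊣ F) :=
  stmt10_general E F hE hF hadj
end

section
/- Let N and l be positive integers, ν = (ν_1,…,ν_l) a tuple of positive integers with ν_1 + ⋯ + ν_l = N, and ρ_ν ∈ ℤ^N as defined. Fix integers e ≥ 2 and k with 1 ≤ k ≤ e−1. Let λ ∈ ℤ^N be ν-dominant, and let r ∈ {1,…,N} satisfy λ_r ≡ k (mod e). Then λ ≥ ρ_ν (coordinatewise) if and only if λ + ε_r ≥ ρ_ν, where ε_r denotes the r-th standard basis vector of ℤ^N. -/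
/-- The partial sum `ν_1 + ⋯ + ν_t` (the sum of the first `t` entries of `ν`). -/
def partialSum {l : ℕ} (ν : Fin l → ℕ) (t : ℕ) : ℕ :=
  ∑ i ∈ Finset.univ.filter fun i : Fin l => (i : ℕ) < t, ν i

/-- The weight `ρ_ν = (ν_1, ν_1−1, …, 1, ν_2, …, 1, …, ν_l, …, 1) ∈ ℤ^N`: at the
(0-based) position `j`, its value is `S − j` where `S` is the smallest partial sum
`ν_1 + ⋯ + ν_t` exceeding `j`. -/
noncomputable def rhoNu {l : ℕ} (ν : Fin l → ℕ) (N : ℕ) : Fin N → ℤ := fun j =>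
  ((sInf {s : ℕ | (j : ℕ) < s ∧ ∃ t : Fin l, s = partialSum ν ((t : ℕ) + 1)} : ℕ) : ℤ) -
    ((j : ℕ) : ℤ)

/-- `λ ∈ ℤ^N` is `ν`-dominant: `λ_j > λ_{j+1}` (1-based) for every
`j ∈ {1,…,N−1} \ {ν_1, ν_1+ν_2, …, ν_1+⋯+ν_{l−1}}`. -/
def NuDominant {l N : ℕ} (ν : Fin l → ℕ) (lam : Fin N → ℤ) : Prop :=
  ∀ j : ℕ, ∀ hj : j + 1 < N,
    (¬∃ t : Fin l, (t : ℕ) + 1 < l ∧ j + 1 = partialSum ν ((t : ℕ) + 1)) →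
      lam ⟨j + 1, hj⟩ < lam ⟨j, by omega⟩

lemma psum_top {l : ℕ} (ν : Fin l → ℕ) : partialSum ν l = ∑ i, ν i := by
  unfold partialSum
  congr 1
  ext i
  simp [i.isLt]

lemma mem_set {l N : ℕ} (hl : 0 < l) (ν : Fin l → ℕ) (hsum : ∑ i, ν i = N)
    (j : ℕ) (hj : j < N) :
    N ∈ {s : ℕ | j < s ∧ ∃ t : Fin l, s = partialSum ν ((t : ℕ) + 1)} := by
  refine ⟨hj, ⟨l - 1, by omega⟩, ?_⟩
  simp only []
  rw [show (l - 1) + 1 = l by omega, psum_top, hsum]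

lemma sInf_gt {l N : ℕ} (hl : 0 < l) (ν : Fin l → ℕ) (hsum : ∑ i, ν i = N)
    (j : ℕ) (hj : j < N) :
    j < sInf {s : ℕ | j < s ∧ ∃ t : Fin l, s = partialSum ν ((t : ℕ) + 1)} :=
  (Nat.sInf_mem ⟨N, mem_set hl ν hsum j hj⟩).1

lemma sInf_boundary {l N : ℕ} (hl : 0 < l) (ν : Fin l → ℕ) (hsum : ∑ i, ν i = N)
    (j : ℕ) (hj : j < N) (t : Fin l) (ht : j + 1 = partialSum ν ((t : ℕ) + 1)) :
    sInf {s : ℕ | j < s ∧ ∃ t : Fin l, s = partialSum ν ((t : ℕ) + 1)} = j + 1 := by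
  have h1 : j + 1 ∈ {s : ℕ | j < s ∧ ∃ t : Fin l, s = partialSum ν ((t : ℕ) + 1)} :=
    ⟨by omega, t, ht⟩
  have h2 := Nat.sInf_le h1
  have h3 := sInf_gt hl ν hsum j hj
  omega

lemma sInf_step {l : ℕ} (ν : Fin l → ℕ)
    (j : ℕ) (hnb : ¬∃ t : Fin l, j + 1 = partialSum ν ((t : ℕ) + 1)) :
    sInf {s : ℕ | j + 1 < s ∧ ∃ t : Fin l, s = partialSum ν ((t : ℕ) + 1)} =
    sInf {s : ℕ | j < s ∧ ∃ t : Fin l, s = partialSum ν ((t : ℕ) + 1)} := by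
  congr 1
  ext s
  simp only [Set.mem_setOf_eq]
  constructor
  · rintro ⟨h1, h2⟩; exact ⟨by omega, h2⟩
  · rintro ⟨h1, h2⟩
    refine ⟨?_, h2⟩
    rcases h2 with ⟨t, ht⟩
    by_contra hs
    have : s = j + 1 := by omega
    exact hnb ⟨t, by omega⟩


/-- If `λ` is `ν`-dominant and `λ_r ≡ k (mod e)` with `1 ≤ k ≤ e−1`, then
`λ ≥ ρ_ν` (coordinatewise) iff `λ + ε_r ≥ ρ_ν`. -/
theorem stmt11 (N l : ℕ) (hN : 0 < N) (hl : 0 < l)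
    (ν : Fin l → ℕ) (hν : ∀ i, 0 < ν i) (hsum : ∑ i, ν i = N)
    (e : ℕ) (he : 2 ≤ e) (k : ℕ) (hk1 : 1 ≤ k) (hk2 : k ≤ e - 1)
    (lam : Fin N → ℤ) (hdom : NuDominant ν lam)
    (r : Fin N) (hr : lam r ≡ (k : ℤ) [ZMOD (e : ℤ)]) :
    (∀ j, rhoNu ν N j ≤ lam j) ↔
      (∀ j, rhoNu ν N j ≤ lam j + if j = r then 1 else 0) := by
  constructor
  · intro h j
    have := h j
    split <;> omega
  · intro h j
    by_cases hjr : j = r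
    · subst hjr
      have h1 := h j
      rw [if_pos rfl] at h1
      by_contra hlt
      push_neg at hlt
      have heq : lam j = rhoNu ν N j - 1 := by omega
      -- whether (j:ℕ)+1 is a partial sum
      by_cases hb : ∃ t : Fin l, (j : ℕ) + 1 = partialSum ν ((t : ℕ) + 1)
      · -- then rhoNu j = 1, so lam j = 0, contradicting the congruence
        rcases hb with ⟨t, ht⟩
        have hrho : rhoNu ν N j = 1 := by
          unfold rhoNu
          rw [sInf_boundary hl ν hsum (j : ℕ) j.isLt t ht]
          push_cast; ring
        have hlam0 : lam j = 0 := by omega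
        rw [hlam0] at hr
        have hdvd : (e : ℤ) ∣ (k : ℤ) := by
          have := hr.dvd
          simpa using this
        have : e ∣ k := Int.ofNat_dvd.mp (by exact_mod_cast hdvd)
        have := Nat.le_of_dvd (by omega) this
        omega
      · by_cases hjN : (j : ℕ) + 1 < N
        · -- dominance: lam ⟨j+1⟩ < lam j, but rhoNu ⟨j+1⟩ ≤ lam ⟨j+1⟩
          have hnb : ¬∃ t : Fin l, (t : ℕ) + 1 < l ∧ (j : ℕ) + 1 = partialSum ν ((t : ℕ) + 1) := by
            rintro ⟨t, _, ht⟩; exact hb ⟨t, ht⟩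
          have hdomj := hdom (j : ℕ) hjN hnb
          have h2 := h ⟨(j : ℕ) + 1, hjN⟩
          have hne : (⟨(j : ℕ) + 1, hjN⟩ : Fin N) ≠ j := by
            intro hc
            have := congrArg Fin.val hc
            simp at this
          have hne2 := hne
          rw [if_neg hne] at h2
          have hstep : rhoNu ν N ⟨(j : ℕ) + 1, hjN⟩ = rhoNu ν N j - 1 := by
            unfold rhoNu
            simp only [Fin.val_mk]
            rw [sInf_step ν (j : ℕ) hb]
            push_cast; ring
          have hjj : (⟨(j : ℕ), by omega⟩ : Fin N) = j := by
            apply Fin.ext; rfl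
          rw [hjj] at hdomj
          omega
        · -- j + 1 = N, but N is a partial sum, contradicting hb
          have hjN' : (j : ℕ) + 1 = N := by have := j.isLt; omega
          apply hb
          refine ⟨⟨l - 1, by omega⟩, ?_⟩
          simp only []
          rw [show (l - 1) + 1 = l by omega, psum_top, hsum, hjN']
    · have h1 := h j
      rw [if_neg hjr] at h1
      omega
end
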